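/- Let R be a right Noetherian ring and A the largest right ideal of R with |A|_r < |R|_r (which exists and is a two-sided ideal). Then |R/A|_r = |R|_r and the quotient ring R/A is right Krull-homogeneous, i.e., every nonzero right ideal of R/A has Krull dimension equal to |R/A|_r. -/

import Mathlib

universe u

/-- `DevLE α o`: the Gabriel–Rentschler deviation of the preorder `α` is at most `o`. -/
def DevLE (α : Type u) [Preorder α] (o : Ordinal.{u}) : Prop :=
  ∀ f : ℕ → α, (∀ n, f (n + 1) ≤ f n) →
    ∃ N : ℕ, ∀ n, N ≤ n →
      f n ≤ f (n + 1) ∨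
        ∃ o' : {x : Ordinal.{u} // x < o},
          DevLE {y : α // f (n + 1) ≤ y ∧ y ≤ f n} o'.1
termination_by o
decreasing_by exact o'.2

/-- The deviation (Krull dimension) of a preorder, as the least ordinal bound. -/
noncomputable def dev (α : Type u) [Preorder α] : Ordinal.{u} := sInf {o | DevLE α o}

/-- The left Krull dimension of a ring: deviation of the lattice of left ideals. -/
noncomputable def lKdim (R : Type u) [Ring R] : Ordinal.{u} := dev (Submodule R R)

/-- The right Krull dimension of a ring: deviation of the lattice of right ideals. -/
noncomputable def rKdim (R : Type u) [Ring R] : Ordinal.{u} := dev (Submodule Rᵐᵒᵖ R)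

/-- Krull dimension of a right ideal `J` as a right module: deviation of `[⊥, J]`. -/
noncomputable def rIdealDim (R : Type u) [Ring R] (J : Submodule Rᵐᵒᵖ R) : Ordinal.{u} :=
  dev {I : Submodule Rᵐᵒᵖ R // I ≤ J}

/-- Krull dimension of a left ideal `J` as a left module. -/
noncomputable def lIdealDim (R : Type u) [Ring R] (J : Submodule R R) : Ordinal.{u} :=
  dev {I : Submodule R R // I ≤ J}

/-- A ring is right Krull homogeneous if every nonzero right ideal has full dimension. -/
def RightKH (R : Type u) [Ring R] : Prop :=
  ∀ J : Submodule Rᵐᵒᵖ R, J ≠ ⊥ → rIdealDim R J = rKdim R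

def LeftKH (R : Type u) [Ring R] : Prop :=
  ∀ J : Submodule R R, J ≠ ⊥ → lIdealDim R J = lKdim R

/-- A two-sided ideal is prime if it is proper and `aRb ⊆ P` implies `a ∈ P` or `b ∈ P`. -/
def IsPrimeT {R : Type u} [Ring R] (P : TwoSidedIdeal R) : Prop :=
  (P : Set R) ≠ Set.univ ∧ ∀ a b : R, (∀ r : R, a * r * b ∈ P) → a ∈ P ∨ b ∈ P

/-- Right Krull dimension of the quotient ring `R/I`. -/
noncomputable def rKdimQ {R : Type u} [Ring R] (I : TwoSidedIdeal R) : Ordinal.{u} :=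
  rKdim I.ringCon.Quotient

noncomputable def lKdimQ {R : Type u} [Ring R] (I : TwoSidedIdeal R) : Ordinal.{u} :=
  lKdim I.ringCon.Quotient

/-- `Λ(R)`: primes with full right Krull dimension. -/
def Lam (R : Type u) [Ring R] : Set (TwoSidedIdeal R) :=
  {P | IsPrimeT P ∧ rKdimQ P = rKdim R}

/-- `Λ'(R)`: primes with full left Krull dimension. -/
def Lam' (R : Type u) [Ring R] : Set (TwoSidedIdeal R) :=
  {P | IsPrimeT P ∧ lKdimQ P = lKdim R}

/-- A two-sided ideal viewed as a right ideal. -/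
def rightIdealOf {R : Type u} [Ring R] (I : TwoSidedIdeal R) : Submodule Rᵐᵒᵖ R where
  carrier := I
  zero_mem' := I.zero_mem
  add_mem' := I.add_mem
  smul_mem' := fun r x hx => I.mul_mem_right x r.unop hx

/-- A two-sided ideal viewed as a left ideal. -/
def leftIdealOf {R : Type u} [Ring R] (I : TwoSidedIdeal R) : Submodule R R where
  carrier := I
  zero_mem' := I.zero_mem
  add_mem' := I.add_mem
  smul_mem' := fun r x hx => I.mul_mem_left r x hx

/-- The right annihilator of a set, as a right ideal. -/
def rAnnIdeal (R : Type u) [Ring R] (S : Set R) : Submodule Rᵐᵒᵖ R where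
  carrier := {x | ∀ y ∈ S, y * x = 0}
  zero_mem' := by intro y _; simp
  add_mem' := by intro a b ha hb y hy; rw [mul_add, ha y hy, hb y hy, add_zero]
  smul_mem' := by
    intro r x hx y hy
    show y * (x * r.unop) = 0
    rw [← mul_assoc, hx y hy, zero_mul]

/-- The left annihilator of a set. -/
def lAnnSet (R : Type u) [Ring R] (S : Set R) : Set R := {x | ∀ y ∈ S, x * y = 0}

/-!
Inside the lattice `L` of right ideals, every right ideal `B ⊇ A` sits in the modular "short
exact sequence" `[⊥, A] → [⊥, B] → [A, B]`, and deviation is subadditive along it: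
`dev [⊥, B] ≤ max (dev [⊥, A]) (dev [A, B])`. Since `dev [⊥, A] < dev L`, any `B ⊇ A` with
`dev [A, B] < dev L` would have `dev [⊥, B] < dev L`, hence `B ≤ A` by maximality of `A`.
So `dev [A, B] = dev L` whenever `B ⊋ A`; the interval `[A, B]` is the lattice of right ideals
of `R/A` contained in `B/A`, which gives both claims (`B = R` and `B/A` any nonzero right ideal).
-/

section Deviation

variable {α β : Type u} [Preorder α] [Preorder β]

theorem DevLE.mono {o o' : Ordinal.{u}} (h : DevLE α o) (hoo : o ≤ o') : DevLE α o' := by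
  rw [DevLE] at h ⊢
  intro f hf
  obtain ⟨N, hN⟩ := h f hf
  exact ⟨N, fun n hn => (hN n hn).imp id fun ⟨o₁, h₁⟩ => ⟨⟨o₁, o₁.2.trans_le hoo⟩, h₁⟩⟩

theorem DevLE.comap {o : Ordinal.{u}} (g : α → β) (hg : ∀ x y, x ≤ y ↔ g x ≤ g y)
    (h : DevLE β o) : DevLE α o := by
  induction o using WellFoundedLT.induction generalizing α β with
  | _ o IH =>
    rw [DevLE] at h ⊢
    intro f hf
    obtain ⟨N, hN⟩ := h (g ∘ f) fun n => (hg _ _).1 (hf n)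
    refine ⟨N, fun n hn => (hN n hn).imp (hg _ _).2 fun ⟨o₁, h₁⟩ => ⟨o₁, ?_⟩⟩
    exact IH o₁ o₁.2 (fun y => ⟨g y, (hg _ _).1 y.2.1, (hg _ _).1 y.2.2⟩)
      (fun y z => hg y z) h₁

theorem DevLE.dev_le {o : Ordinal.{u}} (h : DevLE α o) : dev α ≤ o :=
  csInf_le' h

theorem DevLE.devLE_dev {o : Ordinal.{u}} (h : DevLE α o) : DevLE α (dev α) :=
  csInf_mem ⟨o, h⟩

/-- `dev α = sInf ∅ = 0` when `α` admits no bound, so a positive deviation is attained. -/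
theorem devLE_dev_of_pos (h : 0 < dev α) : DevLE α (dev α) := by
  refine csInf_mem (Set.nonempty_iff_ne_empty.2 fun hempty => h.ne' ?_)
  rw [dev, hempty, Ordinal.sInf_empty]

theorem dev_congr (g : α → β) (hg : ∀ x y, x ≤ y ↔ g x ≤ g y)
    (g' : β → α) (hg' : ∀ x y, x ≤ y ↔ g' x ≤ g' y) : dev α = dev β := by
  unfold dev
  congr 1
  ext o
  exact ⟨fun h => h.comap g' hg', fun h => h.comap g hg⟩

theorem devLE_Icc_of_le {a b : α} (hba : b ≤ a) (o : Ordinal.{u}) :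
    DevLE {x : α // a ≤ x ∧ x ≤ b} o := by
  rw [DevLE]
  exact fun f _ => ⟨0, fun n _ => Or.inl ((f n).2.2.trans (hba.trans (f (n + 1)).2.1))⟩

theorem devLE_Icc_iff {lo hi : α} {o : Ordinal.{u}} :
    DevLE {x : α // lo ≤ x ∧ x ≤ hi} o ↔
      ∀ f : ℕ → α, (∀ n, lo ≤ f n ∧ f n ≤ hi) → (∀ n, f (n + 1) ≤ f n) →
        ∃ N, ∀ n, N ≤ n → f n ≤ f (n + 1) ∨
          ∃ o' < o, DevLE {x : α // f (n + 1) ≤ x ∧ x ≤ f n} o' := by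
  rw [DevLE]
  constructor
  · intro h f hmem hf
    obtain ⟨N, hN⟩ := h (fun n => ⟨f n, hmem n⟩) hf
    refine ⟨N, fun n hn => (hN n hn).imp id fun ⟨o₁, h₁⟩ => ⟨o₁, o₁.2, ?_⟩⟩
    exact h₁.comap (fun x => ⟨⟨x.1, (hmem _).1.trans x.2.1, x.2.2.trans (hmem _).2⟩, x.2⟩)
      fun _ _ => Iff.rfl
  · intro h f hf
    obtain ⟨N, hN⟩ := h (fun n => (f n).1) (fun n => (f n).2) hf
    refine ⟨N, fun n hn => (hN n hn).imp id fun ⟨o₁, ho₁, h₁⟩ => ⟨⟨o₁, ho₁⟩, ?_⟩⟩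
    exact h₁.comap (fun y => ⟨y.1.1, y.2⟩) fun _ _ => Iff.rfl

theorem devLE_Iic_iff_Icc_bot [OrderBot α] {b : α} {o : Ordinal.{u}} :
    DevLE {x : α // x ≤ b} o ↔ DevLE {x : α // ⊥ ≤ x ∧ x ≤ b} o :=
  ⟨fun h => h.comap (fun x => ⟨x.1, x.2.2⟩) fun _ _ => Iff.rfl,
    fun h => h.comap (fun x => ⟨x.1, bot_le, x.2⟩) fun _ _ => Iff.rfl⟩

theorem devLE_Icc_step_or_common_bound {a b c d : α} {o : Ordinal.{u}}
    (h₁ : b ≤ a ∨ ∃ o' < o, DevLE {x : α // a ≤ x ∧ x ≤ b} o')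
    (h₂ : d ≤ c ∨ ∃ o' < o, DevLE {x : α // c ≤ x ∧ x ≤ d} o') :
    (b ≤ a ∧ d ≤ c) ∨
      ∃ o' < o, DevLE {x : α // a ≤ x ∧ x ≤ b} o' ∧ DevLE {x : α // c ≤ x ∧ x ≤ d} o' := by
  rcases h₁ with h₁ | ⟨o₁, ho₁, h₁⟩ <;> rcases h₂ with h₂ | ⟨o₂, ho₂, h₂⟩
  · exact Or.inl ⟨h₁, h₂⟩
  · exact Or.inr ⟨o₂, ho₂, devLE_Icc_of_le h₁ o₂, h₂⟩
  · exact Or.inr ⟨o₁, ho₁, h₁, devLE_Icc_of_le h₂ o₁⟩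
  · exact Or.inr ⟨max o₁ o₂, max_lt ho₁ ho₂, h₁.mono (le_max_left _ _),
      h₂.mono (le_max_right _ _)⟩

end Deviation

section ModularLattice

variable {L : Type u} [Lattice L] [IsModularLattice L]

/-- In a modular lattice a descending chain that is stationary after meeting and after joining
with `a` is stationary, so the deviation of `[lo, hi]` is controlled by those of its images in
`[lo ⊓ a, hi ⊓ a]` and `[lo ⊔ a, hi ⊔ a]`. -/
theorem DevLE.of_inf_of_sup (a : L) {o : Ordinal.{u}} {lo hi : L}
    (hinf : DevLE {x : L // lo ⊓ a ≤ x ∧ x ≤ hi ⊓ a} o)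
    (hsup : DevLE {x : L // lo ⊔ a ≤ x ∧ x ≤ hi ⊔ a} o) :
    DevLE {x : L // lo ≤ x ∧ x ≤ hi} o := by
  induction o using WellFoundedLT.induction generalizing lo hi with
  | _ o IH =>
    rw [devLE_Icc_iff] at hinf hsup ⊢
    intro f hmem hf
    obtain ⟨N₁, hN₁⟩ := hinf (fun n => f n ⊓ a)
      (fun n => ⟨inf_le_inf_right a (hmem n).1, inf_le_inf_right a (hmem n).2⟩)
      (fun n => inf_le_inf_right a (hf n))
    obtain ⟨N₂, hN₂⟩ := hsup (fun n => f n ⊔ a)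
      (fun n => ⟨sup_le_sup_right (hmem n).1 a, sup_le_sup_right (hmem n).2 a⟩)
      (fun n => sup_le_sup_right (hf n) a)
    refine ⟨max N₁ N₂, fun n hn => ?_⟩
    rcases devLE_Icc_step_or_common_bound (hN₁ n (le_of_max_le_left hn))
      (hN₂ n (le_of_max_le_right hn)) with ⟨h₁, h₂⟩ | ⟨o', ho', h₁, h₂⟩
    · exact Or.inl (eq_of_le_of_inf_le_of_sup_le (hf n) h₁ h₂).ge
    · exact Or.inr ⟨o', ho', IH o' ho' h₁ h₂⟩

variable [OrderBot L]

theorem DevLE.Iic_of_Iic_of_Icc {a b : L} (hab : a ≤ b) {o₁ o₂ : Ordinal.{u}}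
    (h₁ : DevLE {x : L // x ≤ a} o₁) (h₂ : DevLE {x : L // a ≤ x ∧ x ≤ b} o₂) :
    DevLE {x : L // x ≤ b} (max o₁ o₂) := by
  rw [devLE_Iic_iff_Icc_bot] at h₁ ⊢
  refine DevLE.of_inf_of_sup a ?_ ?_
  · rw [bot_inf_eq, inf_eq_right.2 hab]
    exact h₁.mono (le_max_left _ _)
  · rw [bot_sup_eq, sup_eq_left.2 hab]
    exact h₂.mono (le_max_right _ _)

theorem dev_Iic_le_max {a b : L} (hab : a ≤ b) {o : Ordinal.{u}} (hL : DevLE L o) :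
    dev {x : L // x ≤ b} ≤ max (dev {x : L // x ≤ a}) (dev {x : L // a ≤ x ∧ x ≤ b}) :=
  (DevLE.Iic_of_Iic_of_Icc hab
    (hL.comap (fun x : {x : L // x ≤ a} => x.1) fun _ _ => Iff.rfl).devLE_dev
    (hL.comap (fun x : {x : L // a ≤ x ∧ x ≤ b} => x.1) fun _ _ => Iff.rfl).devLE_dev).dev_le

theorem dev_Icc_eq_dev_of_maximal {a : L} (ha : dev {x : L // x ≤ a} < dev L)
    (hmax : ∀ b : L, dev {x : L // x ≤ b} < dev L → b ≤ a)
    {b : L} (hab : a ≤ b) (hba : ¬b ≤ a) :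
    dev {x : L // a ≤ x ∧ x ≤ b} = dev L := by
  have hL : DevLE L (dev L) := devLE_dev_of_pos (pos_of_gt ha)
  refine le_antisymm ?_ (not_lt.1 fun hlt => hba (hmax b ?_))
  · exact (hL.comap (fun x : {x : L // a ≤ x ∧ x ≤ b} => x.1) fun _ _ => Iff.rfl).dev_le
  · exact (dev_Iic_le_max hab hL).trans_lt (max_lt ha hlt)

end ModularLattice

theorem rKdim_eq_rIdealDim_top (R : Type u) [Ring R] : rKdim R = rIdealDim R ⊤ :=
  dev_congr (fun I => ⟨I, le_top⟩) (fun _ _ => Iff.rfl) Subtype.val fun _ _ => Iff.rfl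

namespace TwoSidedIdeal

variable {R : Type u} [Ring R] (A : TwoSidedIdeal R)

theorem coe_quotient_eq_zero_iff {x : R} : (x : A.ringCon.Quotient) = 0 ↔ x ∈ A := by
  rw [← RingCon.coe_zero, RingCon.eq, A.rel_iff, sub_zero]

def comapRightIdeal (J : Submodule A.ringCon.Quotientᵐᵒᵖ A.ringCon.Quotient) :
    Submodule Rᵐᵒᵖ R where
  carrier := A.ringCon.mk' ⁻¹' J
  zero_mem' := by simp
  add_mem' hx hy := by simpa using J.add_mem hx hy
  smul_mem' r x hx := by
    simpa using J.smul_mem (MulOpposite.op (A.ringCon.mk' r.unop)) hx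

def mapRightIdeal (I : Submodule Rᵐᵒᵖ R) :
    Submodule A.ringCon.Quotientᵐᵒᵖ A.ringCon.Quotient where
  carrier := A.ringCon.mk' '' I
  zero_mem' := ⟨0, I.zero_mem, map_zero _⟩
  add_mem' := by
    rintro _ _ ⟨x, hx, rfl⟩ ⟨y, hy, rfl⟩
    exact ⟨x + y, I.add_mem hx hy, map_add _ _ _⟩
  smul_mem' := by
    rintro r _ ⟨x, hx, rfl⟩
    obtain ⟨s, hs⟩ := A.ringCon.mk'_surjective r.unop
    refine ⟨x * s, I.smul_mem (MulOpposite.op s) hx, ?_⟩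
    rw [map_mul, hs, MulOpposite.smul_eq_mul_unop]

variable {A}

theorem rightIdealOf_le_comapRightIdeal
    (J : Submodule A.ringCon.Quotientᵐᵒᵖ A.ringCon.Quotient) :
    rightIdealOf A ≤ A.comapRightIdeal J := by
  intro x hx
  show (x : A.ringCon.Quotient) ∈ J
  rw [(A.coe_quotient_eq_zero_iff).2 hx]
  exact J.zero_mem

theorem comapRightIdeal_le_comapRightIdeal_iff
    {J J' : Submodule A.ringCon.Quotientᵐᵒᵖ A.ringCon.Quotient} :
    J ≤ J' ↔ A.comapRightIdeal J ≤ A.comapRightIdeal J' := by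
  refine ⟨fun h x hx => h hx, fun h q hq => ?_⟩
  obtain ⟨s, rfl⟩ := A.ringCon.mk'_surjective q
  exact h hq

theorem mapRightIdeal_le_mapRightIdeal_iff {I I' : Submodule Rᵐᵒᵖ R}
    (hI' : rightIdealOf A ≤ I') : I ≤ I' ↔ A.mapRightIdeal I ≤ A.mapRightIdeal I' := by
  refine ⟨fun h => Set.image_mono h, fun h x hx => ?_⟩
  obtain ⟨y, hy, hyx⟩ := h ⟨x, hx, rfl⟩
  have hxy : y - x ∈ A := (A.rel_iff y x).1 ((RingCon.eq _).1 hyx)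
  simpa using I'.sub_mem hy (hI' hxy)

theorem comapRightIdeal_top : A.comapRightIdeal ⊤ = ⊤ :=
  eq_top_iff.2 fun _ _ => Submodule.mem_top

theorem eq_bot_of_comapRightIdeal_le
    {J : Submodule A.ringCon.Quotientᵐᵒᵖ A.ringCon.Quotient}
    (h : A.comapRightIdeal J ≤ rightIdealOf A) : J = ⊥ := by
  refine (Submodule.eq_bot_iff J).2 fun q hq => ?_
  obtain ⟨s, rfl⟩ := A.ringCon.mk'_surjective q
  exact (A.coe_quotient_eq_zero_iff).2 (h hq)

theorem rIdealDim_quotient (J : Submodule A.ringCon.Quotientᵐᵒᵖ A.ringCon.Quotient) :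
    rIdealDim A.ringCon.Quotient J =
      dev {I : Submodule Rᵐᵒᵖ R // rightIdealOf A ≤ I ∧ I ≤ A.comapRightIdeal J} :=
  dev_congr
    (fun K => ⟨A.comapRightIdeal K.1, rightIdealOf_le_comapRightIdeal K.1,
      comapRightIdeal_le_comapRightIdeal_iff.1 K.2⟩)
    (fun _ _ => comapRightIdeal_le_comapRightIdeal_iff)
    (fun I => ⟨A.mapRightIdeal I.1, by rintro _ ⟨y, hy, rfl⟩; exact I.2.2 hy⟩)
    (fun _ I' => mapRightIdeal_le_mapRightIdeal_iff I'.2.1)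

end TwoSidedIdeal

open TwoSidedIdeal in
theorem stmt2_general (R : Type u) [Ring R]
    (A : TwoSidedIdeal R)
    (h1 : rIdealDim R (rightIdealOf A) < rKdim R)
    (h2 : ∀ I : Submodule Rᵐᵒᵖ R, rIdealDim R I < rKdim R → I ≤ rightIdealOf A) :
    rKdimQ A = rKdim R ∧ RightKH A.ringCon.Quotient := by
  have hfull : ∀ J, ¬A.comapRightIdeal J ≤ rightIdealOf A →
      rIdealDim A.ringCon.Quotient J = rKdim R := fun J hJ => by
    rw [rIdealDim_quotient]
    exact dev_Icc_eq_dev_of_maximal h1 h2 (rightIdealOf_le_comapRightIdeal J) hJ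
  have hA : rKdimQ A = rKdim R := by
    rw [rKdimQ, rKdim_eq_rIdealDim_top]
    refine hfull ⊤ fun htop => h1.ne ?_
    rw [comapRightIdeal_top, top_le_iff] at htop
    rw [htop, rKdim_eq_rIdealDim_top]
  exact ⟨hA, fun J hJ => (hfull J (mt eq_bot_of_comapRightIdeal_le hJ)).trans hA.symm⟩

/-- If `A` is the largest right ideal with `|A|_r < |R|_r` (a two-sided
ideal), then `|R/A|_r = |R|_r` and `R/A` is right Krull-homogeneous. -/
theorem stmt2 (R : Type u) [Ring R] [IsNoetherianRing Rᵐᵒᵖ]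
    (A : TwoSidedIdeal R)
    (h1 : rIdealDim R (rightIdealOf A) < rKdim R)
    (h2 : ∀ I : Submodule Rᵐᵒᵖ R, rIdealDim R I < rKdim R → I ≤ rightIdealOf A) :
    rKdimQ A = rKdim R ∧ RightKH A.ringCon.Quotient :=
  stmt2_general R A h1 h2
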